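/- Fix n ≥ 4, S = {0,…,n}, μ a probability measure on S with μ(i) = 1/(n+1) for 1 ≤ i ≤ n-1, μ(0), μ(n) > 0, μ(0) + μ(n) = 2/(n+1). Define conductances a(i) = (1/2)·min(μ(i), μ(i+1)) and Dirichlet form E(f) = ∑_{i=0}^{n-1}(f(i+1)-f(i))²·a(i). Then the optimal Poincaré constant C = sup{ Var_μ(f)/E(f) : f nonconstant } satisfies C ≤ n·max((n+1)/2, 2). -/

import Mathlib

/-!
Write `Var_μ f = ∑_{x<y} μ x μ y (f x - f y)²` and bound each `(f x - f y)²` by Cauchy–Schwarz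
along the path `x, x+1, …, y`. Such a path has at most `n - 1` edges unless it joins the two
endpoints, so, with `μ[0,i]` and `μ[i+1,n]` the masses on either side of the edge `(i, i+1)`,
`Var_μ f ≤ ∑ᵢ (f (i+1) - f i)² ((n-1) μ[0,i] μ[i+1,n] + μ 0 μ n)`.
On an edge between interior points `μ[0,i] μ[i+1,n] ≤ 1/4` and `μ 0 μ n ≤ (n+1)⁻²`, which fits
under `n M / (2(n+1))` as soon as `n ≤ 2M`; on an edge at an endpoint of mass `e` the weight is at
most `(n-1) e + e ≤ n M e / 2` once `M ≥ 2`. The saving on the longest path is needed because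
`(n + 1) / 2` in the statement is natural-number division, so `M` may be only `n / 2`.
-/

open Finset

lemma sum_sq_mul_mul_sum_sub_sq (μ f : ℕ → ℝ) (m : ℕ) :
    (∑ x ∈ range m, f x ^ 2 * μ x) * (∑ x ∈ range m, μ x) - (∑ x ∈ range m, f x * μ x) ^ 2 =
      ∑ y ∈ range m, ∑ x ∈ range y, μ x * μ y * (f x - f y) ^ 2 := by
  induction m with
  | zero => simp
  | succ m ih =>
    have hnew : ∑ x ∈ range m, μ x * μ m * (f x - f m) ^ 2 =
        (∑ x ∈ range m, f x ^ 2 * μ x) * μ m + f m ^ 2 * μ m * ∑ x ∈ range m, μ x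
          - 2 * (f m * μ m) * ∑ x ∈ range m, f x * μ x := by
      simp only [mul_sum, sum_mul, ← sum_add_distrib, ← sum_sub_distrib]
      exact sum_congr rfl fun x _ => by ring
    simp only [sum_range_succ]
    linear_combination ih - hnew

lemma sq_sub_le_mul_sum_sq_sub_succ (f : ℕ → ℝ) {x y : ℕ} (hxy : x ≤ y) :
    (f y - f x) ^ 2 ≤ (y - x : ℕ) * ∑ i ∈ Ico x y, (f (i + 1) - f i) ^ 2 := by
  simpa [sum_Ico_sub f hxy] using
    sq_sum_le_card_mul_sum_sq (s := Ico x y) (f := fun i => f (i + 1) - f i)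

lemma sum_range_sum_range_mul_sum_Ico (μ g : ℕ → ℝ) (n : ℕ) :
    ∑ y ∈ range (n + 1), ∑ x ∈ range y, μ x * μ y * ∑ i ∈ Ico x y, g i =
      ∑ i ∈ range n, g i * ((∑ x ∈ range (i + 1), μ x) * ∑ y ∈ Ico (i + 1) (n + 1), μ y) := by
  calc _ = ∑ y ∈ range (n + 1), ∑ i ∈ range y, ∑ x ∈ range (i + 1), μ x * μ y * g i := by
        refine sum_congr rfl fun y _ => ?_
        simp only [mul_sum]
        exact sum_comm' fun x i => by simp only [mem_range, mem_Ico]; omega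
    _ = ∑ i ∈ range n, ∑ y ∈ Ico (i + 1) (n + 1), ∑ x ∈ range (i + 1), μ x * μ y * g i :=
        sum_comm' fun y i => by simp only [mem_range, mem_Ico]; omega
    _ = _ := by
        refine sum_congr rfl fun i _ => ?_
        simp only [sum_mul, mul_sum]
        exact sum_congr rfl fun y _ => sum_congr rfl fun x _ => by ring

lemma sum_sq_mul_mul_sum_sub_sq_le (μ f : ℕ → ℝ) {n : ℕ} (hn : 0 < n)
    (hμ : ∀ x ≤ n, 0 ≤ μ x) :
    (∑ x ∈ range (n + 1), f x ^ 2 * μ x) * (∑ x ∈ range (n + 1), μ x)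
        - (∑ x ∈ range (n + 1), f x * μ x) ^ 2 ≤
      ∑ i ∈ range n, (f (i + 1) - f i) ^ 2 *
        ((n - 1) * ((∑ x ∈ range (i + 1), μ x) * ∑ y ∈ Ico (i + 1) (n + 1), μ y)
          + μ 0 * μ n) := by
  set g : ℕ → ℝ := fun i => (f (i + 1) - f i) ^ 2
  -- Every pair other than the two endpoints is joined by a path of at most `n - 1` edges.
  have hpairs : ∑ y ∈ range (n + 1), ∑ x ∈ range y,
      (μ x * μ y * (f x - f y) ^ 2 - (n - 1) * (μ x * μ y * ∑ i ∈ Ico x y, g i)) ≤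
        μ 0 * μ n * ∑ i ∈ range n, g i := by
    rw [sum_sigma']
    refine (sum_le_sum_of_subset_of_nonpos' (s := {⟨n, 0⟩}) (by simpa using hn) ?_).trans ?_
    · rintro ⟨y, x⟩ hxy hne
      simp only [mem_sigma, mem_range, mem_singleton, Sigma.mk.injEq, heq_eq_eq, not_and] at hxy hne
      have hlen : ((y - x : ℕ) : ℝ) ≤ n - 1 := by
        rw [← Nat.cast_one, ← Nat.cast_sub hn]; exact_mod_cast (by omega : y - x ≤ n - 1)
      have := (sq_sub_le_mul_sum_sq_sub_succ f hxy.2.le).trans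
        (mul_le_mul_of_nonneg_right hlen (sum_nonneg fun i _ => sq_nonneg _))
      have hμxy := mul_nonneg (hμ x (by omega)) (hμ y (by omega))
      nlinarith
    · have := sq_sub_le_mul_sum_sq_sub_succ f (Nat.zero_le n)
      rw [Nat.sub_zero, Nat.Ico_zero_eq_range] at this
      simp only [sum_singleton, Nat.Ico_zero_eq_range]
      nlinarith [mul_nonneg (hμ 0 (Nat.zero_le n)) (hμ n le_rfl)]
  rw [sum_sq_mul_mul_sum_sub_sq]
  simp only [sum_sub_distrib, ← mul_sum, sum_range_sum_range_mul_sum_Ico] at hpairs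
  simp only [mul_add, sum_add_distrib, ← sum_mul, mul_left_comm _ ((n : ℝ) - 1), ← mul_sum]
  linarith

lemma interior_edge_bound {n M p q e₀ eₙ : ℝ} (hn : 3 ≤ n) (hM : n ≤ 2 * M) (hpq : p + q = 1)
    (he : e₀ + eₙ = 2 / (n + 1)) :
    (n - 1) * (p * q) + e₀ * eₙ ≤ n * M * (1 / 2 * (1 / (n + 1))) := by
  set m := 1 / (n + 1) with hm_def
  have hm : m * (n + 1) = 1 := by rw [hm_def]; field_simp
  have hm0 : 0 < m := by positivity
  have hpq' : p * q ≤ 1 / 4 := by nlinarith [sq_nonneg (p - q)]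
  have he' : e₀ * eₙ ≤ m ^ 2 := by
    have : e₀ + eₙ = 2 * m := by rw [he, hm_def]; ring
    nlinarith [sq_nonneg (e₀ - eₙ)]
  have hm4 : m ^ 2 ≤ m / 4 := by nlinarith
  calc (n - 1) * (p * q) + e₀ * eₙ ≤ (n - 1) / 4 + m / 4 := by nlinarith
    _ = n ^ 2 * m / 4 := by linear_combination (1 - n) / 4 * hm
    _ ≤ n * M * (1 / 2 * m) := by
      nlinarith [mul_nonneg (mul_nonneg (by linarith : 0 ≤ n) hm0.le) (sub_nonneg.mpr hM)]

lemma endpoint_edge_bound {n M e q e' : ℝ} (hn : 1 ≤ n) (hM : 2 ≤ M) (he : 0 ≤ e) (hq : q ≤ 1)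
    (he' : e' ≤ 1) :
    (n - 1) * (e * q) + e * e' ≤ n * M * (1 / 2 * e) :=
  calc (n - 1) * (e * q) + e * e' ≤ (n - 1) * e + e :=
        add_le_add (mul_le_mul_of_nonneg_left (mul_le_of_le_one_right he hq) (by linarith))
          (mul_le_of_le_one_right he he')
    _ = n * e := by ring
    _ ≤ n * M * (1 / 2 * e) := by
      nlinarith [mul_nonneg (mul_nonneg (by linarith : 0 ≤ n) he) (sub_nonneg.mpr hM)]

section EndpointPerturbed

variable {n : ℕ} {μ : ℕ → ℝ}

lemma nonneg_of_endpoint_perturbed (hμmid : ∀ i, 1 ≤ i → i ≤ n - 1 → μ i = 1 / (n + 1))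
    (hμ0 : 0 < μ 0) (hμn : 0 < μ n) : ∀ x ≤ n, 0 ≤ μ x := by
  intro x hx
  rcases Nat.eq_zero_or_pos x with rfl | hx0
  · exact hμ0.le
  rcases hx.eq_or_lt with rfl | hxn
  · exact hμn.le
  rw [hμmid x hx0 (by omega)]
  positivity

lemma sum_range_eq_one_of_endpoint_perturbed (hn : 1 ≤ n)
    (hμmid : ∀ i, 1 ≤ i → i ≤ n - 1 → μ i = 1 / (n + 1)) (hμends : μ 0 + μ n = 2 / (n + 1)) :
    ∑ x ∈ range (n + 1), μ x = 1 := by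
  rw [sum_range_succ, ← sum_range_add_sum_Ico μ hn, sum_range_one,
    sum_congr rfl fun i hi => hμmid i (mem_Ico.mp hi).1 (by have := (mem_Ico.mp hi).2; omega),
    sum_const, Nat.card_Ico, nsmul_eq_mul, Nat.cast_sub hn]
  have : ((n : ℝ) - 1) * (1 / (n + 1)) + 2 / (n + 1) = 1 := by field_simp; ring
  push_cast
  linarith

lemma cut_bound_of_endpoint_perturbed {M : ℝ} (hn : 4 ≤ n)
    (hμmid : ∀ i, 1 ≤ i → i ≤ n - 1 → μ i = 1 / (n + 1)) (hμ0 : 0 ≤ μ 0) (hμn : 0 ≤ μ n)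
    (hμends : μ 0 + μ n = 2 / (n + 1)) (hM2 : 2 ≤ M) (hMn : n ≤ 2 * M)
    {i j : ℕ} (hi : i < n) (hj : j = i ∨ j = i + 1) :
    (n - 1) * ((∑ x ∈ range (i + 1), μ x) * ∑ y ∈ Ico (i + 1) (n + 1), μ y) + μ 0 * μ n ≤
      n * M * (1 / 2 * μ j) := by
  have hcut : (∑ x ∈ range (i + 1), μ x) + ∑ y ∈ Ico (i + 1) (n + 1), μ y = 1 := by
    rw [sum_range_add_sum_Ico μ (by omega),
      sum_range_eq_one_of_endpoint_perturbed (by omega) hμmid hμends]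
  have hn4 : (4 : ℝ) ≤ n := by exact_mod_cast hn
  have hends : μ 0 ≤ 1 ∧ μ n ≤ 1 := by
    have : 2 / ((n : ℝ) + 1) ≤ 1 := by rw [div_le_one (by positivity)]; linarith
    constructor <;> linarith
  by_cases hj0 : j = 0
  · obtain rfl : i = 0 := by omega
    subst hj0
    rw [sum_range_one] at hcut ⊢
    exact endpoint_edge_bound (q := ∑ y ∈ Ico 1 (n + 1), μ y) (by linarith) hM2 hμ0 (by linarith)
      hends.2
  by_cases hjn : j = n
  · rw [hjn]
    rw [show i + 1 = n by omega, Nat.Ico_succ_singleton, sum_singleton] at hcut ⊢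
    have := endpoint_edge_bound (n := n) (q := ∑ x ∈ range n, μ x) (by linarith) hM2 hμn
      (by linarith) hends.1
    linarith [mul_comm (μ 0) (μ n), mul_comm (∑ x ∈ range n, μ x) (μ n)]
  rw [hμmid j (by omega) (by omega)]
  exact interior_edge_bound (by linarith) hMn hcut hμends

end EndpointPerturbed

theorem stmt_16 (n : ℕ) (hn : 4 ≤ n) (μ : ℕ → ℝ) (a : ℕ → ℝ)
    (E : (ℕ → ℝ) → ℝ)
    (hμmid : ∀ i, 1 ≤ i → i ≤ n - 1 → μ i = 1 / (n + 1))
    (hμ0 : 0 < μ 0) (hμn : 0 < μ n)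
    (hμends : μ 0 + μ n = 2 / (n + 1))
    (ha : ∀ i, a i = (1 / 2) * min (μ i) (μ (i + 1)))
    (hE : ∀ f : ℕ → ℝ, E f = ∑ i ∈ Finset.range n, (f (i + 1) - f i) ^ 2 * a i) :
    ∀ f : ℕ → ℝ,
      ∑ x ∈ Finset.range (n + 1), f x ^ 2 * μ x -
          (∑ x ∈ Finset.range (n + 1), f x * μ x) ^ 2 ≤
        (n : ℝ) * max ((n + 1) / 2) 2 * E f := by
  intro f
  have hM2 : 2 ≤ ((max ((n + 1) / 2) 2 : ℕ) : ℝ) := by exact_mod_cast le_max_right _ _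
  have hMn : (n : ℝ) ≤ 2 * ((max ((n + 1) / 2) 2 : ℕ) : ℝ) := by
    exact_mod_cast (by omega : n ≤ 2 * max ((n + 1) / 2) 2)
  calc _ = (∑ x ∈ range (n + 1), f x ^ 2 * μ x) * (∑ x ∈ range (n + 1), μ x)
          - (∑ x ∈ range (n + 1), f x * μ x) ^ 2 := by
        rw [sum_range_eq_one_of_endpoint_perturbed (by omega) hμmid hμends, mul_one]
    _ ≤ _ :=
        sum_sq_mul_mul_sum_sub_sq_le μ f (by omega) (nonneg_of_endpoint_perturbed hμmid hμ0 hμn)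
    _ ≤ ∑ i ∈ range n, (f (i + 1) - f i) ^ 2 * (n * max ((n + 1) / 2) 2 * a i) := by
      gcongr with i hi
      rw [ha]
      rcases min_cases (μ i) (μ (i + 1)) with ⟨h, -⟩ | ⟨h, -⟩ <;> rw [h] <;>
        exact cut_bound_of_endpoint_perturbed hn hμmid hμ0.le hμn.le hμends hM2 hMn
          (mem_range.mp hi) (by omega)
    _ = _ := by
      rw [hE, mul_sum]
      exact sum_congr rfl fun i _ => by ring
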